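/- Let a ∈ [0,1], let Φ_a : M₂(ℂ) → M₂(ℂ) be the dephasing channel, let H = σ₃ and E ∈ [−1,0], and write |E| = −E. Then for every δ with 1 − |E| ≤ δ ≤ √(2(1 − |E|)), the Dobrushin curve of Φ_a satisfies F_E(δ) ≥ g_E(δ), where g_E(δ) = √(a²(δ² − (1−|E|)²) + (1−|E|)²). (Explicitly, with x = √(δ² − (1−|E|)²), the states with Bloch vectors (x,0,−|E|) and (0,0,−1) both lie in G_E, are at trace distance δ, and are mapped by Φ_a to states at trace distance g_E(δ).) -/

import Mathlib

/-!
Writing a qubit state as `½(1 + w·σ)`, the Pauli relations give `(w·σ)² = ‖w‖² 1`. Hence the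
trace norm of a difference of Bloch states is the Euclidean distance of their Bloch vectors,
and a Bloch state is a density matrix exactly when `‖w‖ ≤ 1`. The dephasing channel multiplies
the first two Bloch coordinates by `a`, so both distances can be read off the explicit Bloch
vectors `(x, 0, E)` and `(0, 0, -1)`. The Dobrushin curve dominates the resulting value because
its defining set of reals is bounded, all Bloch vectors lying in the unit ball.
-/

open scoped ComplexOrder

/-- The trace norm `‖A‖₁ = tr √(A†A)` of a complex matrix. -/
noncomputable def traceNorm {d : ℕ} (A : Matrix (Fin d) (Fin d) ℂ) : ℝ :=
  (((Matrix.posSemidef_conjTranspose_mul_self A).1.eigenvectorUnitary :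
      Matrix (Fin d) (Fin d) ℂ) *
    Matrix.diagonal (((↑) : ℝ → ℂ) ∘ (√·) ∘
      (Matrix.posSemidef_conjTranspose_mul_self A).1.eigenvalues) *
    (star (Matrix.posSemidef_conjTranspose_mul_self A).1.eigenvectorUnitary :
      Matrix (Fin d) (Fin d) ℂ)).trace.re

/-- A density matrix: positive semidefinite with unit trace. -/
def IsDensity {d : ℕ} (ρ : Matrix (Fin d) (Fin d) ℂ) : Prop :=
  ρ.PosSemidef ∧ ρ.trace = 1

/-- The Pauli matrix `σ₁`. -/
def pauli1 : Matrix (Fin 2) (Fin 2) ℂ := !![0, 1; 1, 0]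

/-- The Pauli matrix `σ₂`. -/
def pauli2 : Matrix (Fin 2) (Fin 2) ℂ := !![0, -Complex.I; Complex.I, 0]

/-- The Pauli matrix `σ₃`. -/
def pauli3 : Matrix (Fin 2) (Fin 2) ℂ := !![1, 0; 0, -1]

/-- The dephasing channel with parameter `a`: the (complex-linear) map acting on the Pauli
basis by `α₀I + α₁σ₁ + α₂σ₂ + α₃σ₃ ↦ α₀I + a(α₁σ₁ + α₂σ₂) + α₃σ₃`. -/
def IsDephasing (a : ℝ) (Φ : Matrix (Fin 2) (Fin 2) ℂ →ₗ[ℂ] Matrix (Fin 2) (Fin 2) ℂ) : Prop :=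
  ∀ α : Fin 4 → ℝ,
    Φ ((α 0 : ℂ) • 1 + (α 1 : ℂ) • pauli1 + (α 2 : ℂ) • pauli2 + (α 3 : ℂ) • pauli3) =
      (α 0 : ℂ) • 1 + ((a : ℂ) * (α 1 : ℂ)) • pauli1 + ((a : ℂ) * (α 2 : ℂ)) • pauli2 +
        (α 3 : ℂ) • pauli3

/-- The qubit state with Bloch vector `(w₁, w₂, w₃)`: `ρ = ½(I + w₁σ₁ + w₂σ₂ + w₃σ₃)`. -/
noncomputable def blochState (w₁ w₂ w₃ : ℝ) : Matrix (Fin 2) (Fin 2) ℂ :=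
  (1 / 2 : ℂ) • ((1 : Matrix (Fin 2) (Fin 2) ℂ) +
    (w₁ : ℂ) • pauli1 + (w₂ : ℂ) • pauli2 + (w₃ : ℂ) • pauli3)

/-- The Dobrushin curve `F_E(δ)` of a map `Φ` with respect to the Hamiltonian `H` and the
energy bound `E`. -/
noncomputable def dobrushinCurve {d : ℕ}
    (Φ : Matrix (Fin d) (Fin d) ℂ → Matrix (Fin d) (Fin d) ℂ)
    (H : Matrix (Fin d) (Fin d) ℂ) (E δ : ℝ) : ℝ :=
  sSup {r | ∃ ρ₀ ρ₁ : Matrix (Fin d) (Fin d) ℂ, IsDensity ρ₀ ∧ IsDensity ρ₁ ∧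
    ((ρ₀ * H).trace).re ≤ E ∧ ((ρ₁ * H).trace).re ≤ E ∧
    traceNorm (ρ₀ - ρ₁) ≤ δ ∧ r = traceNorm (Φ ρ₀ - Φ ρ₁)}

open Matrix

lemma Matrix.IsHermitian.eigenvalues_eq_of_eq_smul_one {n : Type*} [Fintype n] [DecidableEq n]
    {A : Matrix n n ℂ} (hA : A.IsHermitian) {c : ℝ} (h : A = (c : ℂ) • 1) (i : n) :
    hA.eigenvalues i = c := by
  subst h
  have hv := hA.mulVec_eigenvectorBasis i
  have hne : (hA.eigenvectorBasis i : n → ℂ) ≠ 0 := fun h0 =>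
    hA.eigenvectorBasis.orthonormal.ne_zero i (by ext j; simp [h0])
  rw [smul_mulVec, one_mulVec, RCLike.real_smul_eq_coe_smul (K := ℂ)] at hv
  exact Complex.ofReal_injective (smul_left_injective ℂ hne hv).symm

lemma traceNorm_eq_sum_sqrt_eigenvalues {d : ℕ} (A : Matrix (Fin d) (Fin d) ℂ) :
    traceNorm A = ∑ i, √((posSemidef_conjTranspose_mul_self A).1.eigenvalues i) := by
  rw [traceNorm, trace_mul_cycle, Unitary.coe_star_mul_self, one_mul, trace_diagonal]
  simp [Complex.re_sum]

lemma traceNorm_eq_of_conjTranspose_mul_self_eq_smul_one {d : ℕ} {A : Matrix (Fin d) (Fin d) ℂ}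
    {c : ℝ} (h : Aᴴ * A = (c : ℂ) • 1) : traceNorm A = d * √c := by
  simp [traceNorm_eq_sum_sqrt_eigenvalues, IsHermitian.eigenvalues_eq_of_eq_smul_one _ h]

def pauliDot (w₁ w₂ w₃ : ℝ) : Matrix (Fin 2) (Fin 2) ℂ :=
  (w₁ : ℂ) • pauli1 + (w₂ : ℂ) • pauli2 + (w₃ : ℂ) • pauli3

lemma pauliDot_apply (w₁ w₂ w₃ : ℝ) :
    pauliDot w₁ w₂ w₃ = !![(w₃ : ℂ), w₁ - w₂ * Complex.I; w₁ + w₂ * Complex.I, -w₃] := by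
  ext i j
  fin_cases i <;> fin_cases j <;> simp [pauliDot, pauli1, pauli2, pauli3, sub_eq_add_neg]

lemma isHermitian_pauliDot (w₁ w₂ w₃ : ℝ) : (pauliDot w₁ w₂ w₃).IsHermitian := by
  ext i j
  fin_cases i <;> fin_cases j <;> simp [pauliDot_apply, Complex.ext_iff]

lemma pauliDot_mul_self (w₁ w₂ w₃ : ℝ) :
    pauliDot w₁ w₂ w₃ * pauliDot w₁ w₂ w₃ = ((w₁ ^ 2 + w₂ ^ 2 + w₃ ^ 2 : ℝ) : ℂ) • 1 := by
  rw [pauliDot_apply]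
  ext i j
  fin_cases i <;> fin_cases j <;> simp [Matrix.mul_apply] <;> ring_nf <;> simp [Complex.I_sq]

lemma traceNorm_half_smul_pauliDot (w₁ w₂ w₃ : ℝ) :
    traceNorm ((1 / 2 : ℂ) • pauliDot w₁ w₂ w₃) = √(w₁ ^ 2 + w₂ ^ 2 + w₃ ^ 2) := by
  have hsq : ((1 / 2 : ℂ) • pauliDot w₁ w₂ w₃)ᴴ * ((1 / 2 : ℂ) • pauliDot w₁ w₂ w₃) =
      (((w₁ ^ 2 + w₂ ^ 2 + w₃ ^ 2) / 4 : ℝ) : ℂ) • 1 := by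
    rw [conjTranspose_smul, (isHermitian_pauliDot w₁ w₂ w₃).eq, smul_mul_smul_comm,
      pauliDot_mul_self, smul_smul]
    congr 1
    push_cast
    norm_num
    ring
  rw [traceNorm_eq_of_conjTranspose_mul_self_eq_smul_one hsq,
    Real.sqrt_div' _ (by norm_num : (0 : ℝ) ≤ 4), show (4 : ℝ) = 2 ^ 2 by norm_num,
    Real.sqrt_sq zero_le_two]
  push_cast
  ring

lemma blochState_eq (w₁ w₂ w₃ : ℝ) :
    blochState w₁ w₂ w₃ = (1 / 2 : ℂ) • (1 + pauliDot w₁ w₂ w₃) := by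
  simp only [blochState, pauliDot, add_assoc]

lemma blochState_sub_blochState (v₁ v₂ v₃ w₁ w₂ w₃ : ℝ) :
    blochState v₁ v₂ v₃ - blochState w₁ w₂ w₃ =
      (1 / 2 : ℂ) • pauliDot (v₁ - w₁) (v₂ - w₂) (v₃ - w₃) := by
  simp only [blochState, pauliDot]
  push_cast
  module

lemma traceNorm_blochState_sub_blochState (v₁ v₂ v₃ w₁ w₂ w₃ : ℝ) :
    traceNorm (blochState v₁ v₂ v₃ - blochState w₁ w₂ w₃) =
      √((v₁ - w₁) ^ 2 + (v₂ - w₂) ^ 2 + (v₃ - w₃) ^ 2) := by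
  rw [blochState_sub_blochState, traceNorm_half_smul_pauliDot]

lemma isDensity_blochState {w₁ w₂ w₃ : ℝ} (hw : w₁ ^ 2 + w₂ ^ 2 + w₃ ^ 2 ≤ 1) :
    IsDensity (blochState w₁ w₂ w₃) := by
  set P := pauliDot w₁ w₂ w₃
  -- `2 (1 + P) = (1 + P)ᴴ (1 + P) + (1 - ‖w‖²) 1` since `P` is Hermitian with `P² = ‖w‖² 1`
  have hdecomp : blochState w₁ w₂ w₃ = (1 / 4 : ℂ) •
      ((1 + P)ᴴ * (1 + P) + ((1 - (w₁ ^ 2 + w₂ ^ 2 + w₃ ^ 2) : ℝ) : ℂ) • 1) := by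
    rw [blochState_eq, conjTranspose_add, conjTranspose_one, (isHermitian_pauliDot _ _ _).eq,
      add_mul, mul_add, mul_add, pauliDot_mul_self]
    simp only [one_mul, mul_one]
    push_cast
    module
  refine ⟨?_, ?_⟩
  · rw [hdecomp]
    refine PosSemidef.smul ((posSemidef_conjTranspose_mul_self _).add ?_)
      (by norm_num [Complex.le_def])
    exact PosSemidef.one.smul (by exact_mod_cast sub_nonneg.mpr hw)
  · simp [blochState_eq, pauliDot_apply, trace_fin_two]

lemma det_blochState (w₁ w₂ w₃ : ℝ) :
    (blochState w₁ w₂ w₃).det = (((1 - (w₁ ^ 2 + w₂ ^ 2 + w₃ ^ 2)) / 4 : ℝ) : ℂ) := by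
  simp [blochState_eq, pauliDot_apply, det_fin_two]
  linear_combination ((w₂ : ℂ) ^ 2 / 4) * Complex.I_sq

lemma IsDensity.exists_blochState {ρ : Matrix (Fin 2) (Fin 2) ℂ} (hρ : IsDensity ρ) :
    ∃ w₁ w₂ w₃ : ℝ, ρ = blochState w₁ w₂ w₃ ∧ w₁ ^ 2 + w₂ ^ 2 + w₃ ^ 2 ≤ 1 := by
  obtain ⟨hpsd, htr⟩ := hρ
  have h00 := hpsd.1.apply 0 0
  have h11 := hpsd.1.apply 1 1
  have h01 := hpsd.1.apply 0 1
  rw [trace_fin_two] at htr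
  have hρ : ρ = blochState (2 * (ρ 1 0).re) (2 * (ρ 1 0).im) ((ρ 0 0).re - (ρ 1 1).re) := by
    rw [blochState_eq, pauliDot_apply]
    ext i j
    fin_cases i <;> fin_cases j <;> simp [Complex.ext_iff] at h00 h11 h01 htr ⊢ <;>
      constructor <;> linarith
  refine ⟨_, _, _, hρ, ?_⟩
  have hdet := hpsd.det_nonneg
  rw [hρ, det_blochState] at hdet
  have := Complex.zero_le_real.mp hdet
  linarith

lemma trace_blochState_mul_pauli3 (w₁ w₂ w₃ : ℝ) :
    ((blochState w₁ w₂ w₃ * pauli3).trace).re = w₃ := by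
  simp [blochState_eq, pauliDot_apply, pauli3, trace_fin_two, mul_apply]
  ring

lemma IsDephasing.apply_blochState {a : ℝ}
    {Φ : Matrix (Fin 2) (Fin 2) ℂ →ₗ[ℂ] Matrix (Fin 2) (Fin 2) ℂ} (hΦ : IsDephasing a Φ)
    (w₁ w₂ w₃ : ℝ) : Φ (blochState w₁ w₂ w₃) = blochState (a * w₁) (a * w₂) w₃ := by
  have h := hΦ ![1, w₁, w₂, w₃]
  simp only [Matrix.cons_val, Complex.ofReal_one, one_smul] at h
  simp only [blochState, map_smul, h]
  push_cast
  rfl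

lemma IsDephasing.traceNorm_sub_le {a : ℝ}
    {Φ : Matrix (Fin 2) (Fin 2) ℂ →ₗ[ℂ] Matrix (Fin 2) (Fin 2) ℂ} (hΦ : IsDephasing a Φ)
    {ρ₀ ρ₁ : Matrix (Fin 2) (Fin 2) ℂ} (hρ₀ : IsDensity ρ₀) (hρ₁ : IsDensity ρ₁) :
    traceNorm (Φ ρ₀ - Φ ρ₁) ≤ 2 * √(1 + a ^ 2) := by
  obtain ⟨v₁, v₂, v₃, rfl, hv⟩ := hρ₀.exists_blochState
  obtain ⟨w₁, w₂, w₃, rfl, hw⟩ := hρ₁.exists_blochState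
  rw [hΦ.apply_blochState, hΦ.apply_blochState, traceNorm_blochState_sub_blochState,
    show 2 * √(1 + a ^ 2) = √(4 * (1 + a ^ 2)) by
      rw [Real.sqrt_mul' _ (by positivity), show (4 : ℝ) = 2 ^ 2 by norm_num,
        Real.sqrt_sq zero_le_two]]
  have hdist : (v₁ - w₁) ^ 2 + (v₂ - w₂) ^ 2 + (v₃ - w₃) ^ 2 ≤ 4 := by
    nlinarith [sq_nonneg (v₁ + w₁), sq_nonneg (v₂ + w₂), sq_nonneg (v₃ + w₃)]
  gcongr
  nlinarith [sq_nonneg a, sq_nonneg (v₃ - w₃)]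

lemma le_dobrushinCurve {d : ℕ} {Φ : Matrix (Fin d) (Fin d) ℂ → Matrix (Fin d) (Fin d) ℂ}
    {H : Matrix (Fin d) (Fin d) ℂ} {E δ C : ℝ}
    (hC : ∀ {ρ₀ ρ₁}, IsDensity ρ₀ → IsDensity ρ₁ → traceNorm (Φ ρ₀ - Φ ρ₁) ≤ C)
    {ρ₀ ρ₁ : Matrix (Fin d) (Fin d) ℂ} (hρ₀ : IsDensity ρ₀) (hρ₁ : IsDensity ρ₁)
    (hE₀ : ((ρ₀ * H).trace).re ≤ E) (hE₁ : ((ρ₁ * H).trace).re ≤ E)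
    (hδ : traceNorm (ρ₀ - ρ₁) ≤ δ) :
    traceNorm (Φ ρ₀ - Φ ρ₁) ≤ dobrushinCurve Φ H E δ :=
  le_csSup ⟨C, by rintro r ⟨ρ₀, ρ₁, h₀, h₁, -, -, -, rfl⟩; exact hC h₀ h₁⟩
    ⟨ρ₀, ρ₁, hρ₀, hρ₁, hE₀, hE₁, hδ, rfl⟩

theorem stmt_15_general (a : ℝ)
    (Φ : Matrix (Fin 2) (Fin 2) ℂ →ₗ[ℂ] Matrix (Fin 2) (Fin 2) ℂ) (hΦ : IsDephasing a Φ)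
    (E : ℝ) (hE : E ∈ Set.Icc (-1 : ℝ) 0)
    (δ : ℝ) (hδ0 : 1 - (-E) ≤ δ) (hδ1 : δ ≤ Real.sqrt (2 * (1 - (-E)))) :
    IsDensity (blochState (Real.sqrt (δ ^ 2 - (1 - (-E)) ^ 2)) 0 (-(-E))) ∧
    IsDensity (blochState 0 0 (-1)) ∧
    ((blochState (Real.sqrt (δ ^ 2 - (1 - (-E)) ^ 2)) 0 (-(-E)) * pauli3).trace).re ≤ E ∧
    ((blochState 0 0 (-1) * pauli3).trace).re ≤ E ∧
    traceNorm (blochState (Real.sqrt (δ ^ 2 - (1 - (-E)) ^ 2)) 0 (-(-E)) -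
      blochState 0 0 (-1)) = δ ∧
    traceNorm (Φ (blochState (Real.sqrt (δ ^ 2 - (1 - (-E)) ^ 2)) 0 (-(-E))) -
      Φ (blochState 0 0 (-1))) =
        Real.sqrt (a ^ 2 * (δ ^ 2 - (1 - (-E)) ^ 2) + (1 - (-E)) ^ 2) ∧
    Real.sqrt (a ^ 2 * (δ ^ 2 - (1 - (-E)) ^ 2) + (1 - (-E)) ^ 2) ≤
      dobrushinCurve (⇑Φ) pauli3 E δ := by
  simp only [neg_neg, sub_neg_eq_add] at hδ0 hδ1 ⊢
  have hδ : 0 ≤ δ := by linarith [hE.1]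
  have hδsq : δ ^ 2 ≤ 2 * (1 + E) :=
    (pow_le_pow_left₀ hδ hδ1 2).trans_eq (Real.sq_sqrt (by linarith [hE.1]))
  set x := √(δ ^ 2 - (1 + E) ^ 2)
  have hx : x ^ 2 = δ ^ 2 - (1 + E) ^ 2 := Real.sq_sqrt (by nlinarith)
  have hρ₀ : IsDensity (blochState x 0 E) := isDensity_blochState (by nlinarith)
  have hρ₁ : IsDensity (blochState 0 0 (-1)) := isDensity_blochState (by norm_num)
  have hE₀ : ((blochState x 0 E * pauli3).trace).re ≤ E := (trace_blochState_mul_pauli3 ..).le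
  have hE₁ : ((blochState 0 0 (-1) * pauli3).trace).re ≤ E := by
    rw [trace_blochState_mul_pauli3]; exact hE.1
  have hdist : traceNorm (blochState x 0 E - blochState 0 0 (-1)) = δ := by
    rw [traceNorm_blochState_sub_blochState, ← Real.sqrt_sq hδ]
    congr 1
    linear_combination hx
  have himage : traceNorm (Φ (blochState x 0 E) - Φ (blochState 0 0 (-1))) =
      √(a ^ 2 * (δ ^ 2 - (1 + E) ^ 2) + (1 + E) ^ 2) := by
    rw [hΦ.apply_blochState, hΦ.apply_blochState, traceNorm_blochState_sub_blochState, ← hx]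
    congr 1
    ring
  exact ⟨hρ₀, hρ₁, hE₀, hE₁, hdist, himage,
    himage ▸ le_dobrushinCurve hΦ.traceNorm_sub_le hρ₀ hρ₁ hE₀ hE₁ hdist.le⟩

/-- Regime II lower bound for the Dobrushin curve of the dephasing channel with `H = σ₃`,
`E ∈ [−1,0]` and `1 − |E| ≤ δ ≤ √(2(1 − |E|))`: with `x = √(δ² − (1−|E|)²)`, the states
with Bloch vectors `(x,0,−|E|)` and `(0,0,−1)` lie in `G_E`, are at trace distance `δ`,
are mapped to states at trace distance `g_E(δ) = √(a²(δ² − (1−|E|)²) + (1−|E|)²)`, and hence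
`F_E(δ) ≥ g_E(δ)`. -/
theorem stmt_15 (a : ℝ) (ha : a ∈ Set.Icc (0 : ℝ) 1)
    (Φ : Matrix (Fin 2) (Fin 2) ℂ →ₗ[ℂ] Matrix (Fin 2) (Fin 2) ℂ) (hΦ : IsDephasing a Φ)
    (E : ℝ) (hE : E ∈ Set.Icc (-1 : ℝ) 0)
    (δ : ℝ) (hδ0 : 1 - (-E) ≤ δ) (hδ1 : δ ≤ Real.sqrt (2 * (1 - (-E)))) :
    IsDensity (blochState (Real.sqrt (δ ^ 2 - (1 - (-E)) ^ 2)) 0 (-(-E))) ∧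
    IsDensity (blochState 0 0 (-1)) ∧
    ((blochState (Real.sqrt (δ ^ 2 - (1 - (-E)) ^ 2)) 0 (-(-E)) * pauli3).trace).re ≤ E ∧
    ((blochState 0 0 (-1) * pauli3).trace).re ≤ E ∧
    traceNorm (blochState (Real.sqrt (δ ^ 2 - (1 - (-E)) ^ 2)) 0 (-(-E)) -
      blochState 0 0 (-1)) = δ ∧
    traceNorm (Φ (blochState (Real.sqrt (δ ^ 2 - (1 - (-E)) ^ 2)) 0 (-(-E))) -
      Φ (blochState 0 0 (-1))) =
        Real.sqrt (a ^ 2 * (δ ^ 2 - (1 - (-E)) ^ 2) + (1 - (-E)) ^ 2) ∧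
    Real.sqrt (a ^ 2 * (δ ^ 2 - (1 - (-E)) ^ 2) + (1 - (-E)) ^ 2) ≤
      dobrushinCurve (⇑Φ) pauli3 E δ :=
  stmt_15_general a Φ hΦ E hE δ hδ0 hδ1
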